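/- Let ρ be a congruence on M = Mon⟨a,b,c,d : ab=ba, cbad=1, cb²=1, a²d=1, cad=0, cbd=0, cd=1⟩. If the element a is invertible in M/ρ, then ρ = M × M. -/

import Mathlib

inductive Letter | a | b | c | d | z
deriving DecidableEq

abbrev W := FreeMonoid Letter
def A : W := FreeMonoid.of .a
def B : W := FreeMonoid.of .b
def C : W := FreeMonoid.of .c
def D : W := FreeMonoid.of .d
def Z : W := FreeMonoid.of .z

/-- The defining relations of `M = Mon⟨a,b,c,d : ab=ba, cbad=1, cb²=1, a²d=1,
cad=0, cbd=0, cd=1⟩`, with the zero realized by the letter `z`. -/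
def relM : W → W → Prop := fun x y =>
  (x = A * B ∧ y = B * A) ∨
  (x = C * B * A * D ∧ y = 1) ∨ (x = C * B * B ∧ y = 1) ∨
  (x = A * A * D ∧ y = 1) ∨
  (x = C * A * D ∧ y = Z) ∨ (x = C * B * D ∧ y = Z) ∨ (x = C * D ∧ y = 1) ∨
  (∃ l : Letter, x = FreeMonoid.of l * Z ∧ y = Z) ∨
  (∃ l : Letter, x = Z * FreeMonoid.of l ∧ y = Z)

def Mcon : Con W := conGen relM

/-- The monoid `M = Mon⟨a,b,c,d : ab=ba, cbad=1, cb²=1, a²d=1, cad=0, cbd=0, cd=1⟩`. -/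
abbrev M := Mcon.Quotient

/-!
If `a` becomes invertible, then so does `a d`, because `a² d = 1`. The relation `c a d = 0`
then forces `c = 0`, and `c b² = 1` gives `1 = 0`; since `0` absorbs, everything collapses.
-/

theorem Con.eq_top_of_subsingleton {N : Type*} [Monoid N] (ρ : Con N)
    [Subsingleton ρ.Quotient] : ρ = ⊤ :=
  eq_top_iff.mpr fun _ _ _ => ρ.eq.mp (Subsingleton.elim _ _)

section Monoid

variable {N : Type*} [Monoid N]

theorem subsingleton_of_one_eq_of_forall_mul_eq {z : N} (hz : ∀ n, z * n = z) (h1 : 1 = z) :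
    Subsingleton N :=
  ⟨fun x y => by rw [← one_mul x, ← one_mul y, h1, hz, hz]⟩

theorem one_eq_of_isUnit_of_relations {a b c d z : N} (ha : IsUnit a) (hz : ∀ n, z * n = z)
    (haad : a * a * d = 1) (hcad : c * a * d = z) (hcbb : c * b * b = 1) : 1 = z := by
  obtain ⟨u, rfl⟩ := ha
  have had : IsUnit (↑u * d) :=
    ⟨u⁻¹, (Units.eq_inv_of_mul_eq_one_left (by rw [← mul_assoc, haad])).symm⟩
  have hc : c = z := had.mul_left_inj.mp (by rw [hz, ← mul_assoc, hcad])
  rw [← hcbb, hc, hz, hz]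

end Monoid

theorem coe_eq_of_relM {x y : W} (h : relM x y) : (x : M) = y :=
  Mcon.eq.mpr (ConGen.Rel.of _ _ h)

theorem Z_mul (m : M) : (Z : M) * m = Z := by
  induction m using Con.induction_on with
  | H w =>
    induction w using FreeMonoid.recOn with
    | one => simp
    | of_mul l w ih =>
      have hZl : ((Z * FreeMonoid.of l : W) : M) = Z := coe_eq_of_relM (by simp [relM])
      rw [Con.coe_mul, ← mul_assoc, ← Con.coe_mul, hZl, ih]

theorem A_mul_A_mul_D : (A : M) * A * D = 1 := coe_eq_of_relM (by simp [relM])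

theorem C_mul_A_mul_D : (C : M) * A * D = Z := coe_eq_of_relM (by simp [relM])

theorem C_mul_B_mul_B : (C : M) * B * B = 1 := coe_eq_of_relM (by simp [relM])

theorem subsingleton_of_isUnit_map_A {N : Type*} [Monoid N] (f : M →* N)
    (hf : Function.Surjective f) (ha : IsUnit (f A)) : Subsingleton N := by
  have hz : ∀ n, f Z * n = f Z := hf.forall.mpr fun m => by rw [← map_mul, Z_mul]
  refine subsingleton_of_one_eq_of_forall_mul_eq hz (one_eq_of_isUnit_of_relations ha hz
    (b := f B) (c := f C) (d := f D) ?_ ?_ ?_)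
  · rw [← map_mul, ← map_mul, A_mul_A_mul_D, map_one]
  · rw [← map_mul, ← map_mul, C_mul_A_mul_D]
  · rw [← map_mul, ← map_mul, C_mul_B_mul_B, map_one]

/-- If the image of `a` is invertible in `M / ρ`, then `ρ` is the full congruence. -/
theorem stmt17 (ρ : Con M)
    (h : ∃ x : ρ.Quotient, ((A : M) : ρ.Quotient) * x = 1 ∧ x * ((A : M) : ρ.Quotient) = 1) :
    ρ = ⊤ := by
  obtain ⟨x, hax, hxa⟩ := h
  have := subsingleton_of_isUnit_map_A ρ.mk' ρ.mk'_surjective ⟨⟨_, x, hax, hxa⟩, rfl⟩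
  exact ρ.eq_top_of_subsingleton
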